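/- arXiv:2401.05980 — 2 statements merged into one kernel-verified Lean document; each statement's English description precedes it below -/
import Mathlib

section
/- Fix p > 2 and a vector v₁ ∈ ℂⁿ with v₁ ≠ 0 that is real (v₁ ∈ ℝⁿ). For fixed v₂, v₃ ∈ ℂⁿ, define F(z) = |v₁ + z \overline{v₂}|^{p-2} (v₁ + z\overline{v₂}) · v₃ for z ∈ ℂ near 0, where for w ∈ ℂⁿ, |w|² = w·\overline{w}. Then the Wirtinger derivative ∂_{\bar z} F at z = 0 equals ((p−2)/2) |v₁|^{p-4} (v₁·v₂)(v₁·v₃). -/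
/-!
Along the real line `t ↦ v₁ + t w`, the function `‖·‖^q` has derivative `q ‖v₁‖^(q-2) Re⟪v₁, w⟫`
at `t = 0` (for `v₁ ≠ 0`), while `x ↦ x·v₃` is linear. Taking `w = v̄₂` and `w = i v̄₂` gives
`Re(v₁·v₂)` and `Im(v₁·v₂)` respectively, so in `½(∂ₓ + i ∂_y)` these recombine to `v₁·v₂`, and the
contributions of the linear factor cancel because `1 + i² = 0`.
-/

/-- Bilinear (non-conjugating) dot product on `ℂⁿ`. -/
noncomputable def dotc {n : ℕ} (w u : EuclideanSpace ℂ (Fin n)) : ℂ := ∑ i, w i * u i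

open RealInnerProductSpace in
theorem hasDerivAt_norm_add_smul_rpow {E : Type*} [NormedAddCommGroup E] [InnerProductSpace ℝ E]
    (q : ℝ) {v : E} (hv : v ≠ 0) (w : E) :
    HasDerivAt (fun t : ℝ => ‖v + t • w‖ ^ q) (q * ‖v‖ ^ (q - 2) * ⟪v, w⟫) 0 := by
  have hline : HasDerivAt (fun t : ℝ => v + t • w) w 0 := by
    simpa using ((hasDerivAt_id (0 : ℝ)).smul_const w).const_add v
  have hsq := hline.norm_sq.rpow_const (p := q / 2) (Or.inl (by simpa using hv))
  have hpow : ∀ x : E, (‖x‖ ^ 2) ^ (q / 2) = ‖x‖ ^ q := fun x => by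
    rw [← Real.rpow_natCast, ← Real.rpow_mul (norm_nonneg x)]
    congr 1
    ring
  have hpow' : (‖v‖ ^ 2) ^ (q / 2 - 1) = ‖v‖ ^ (q - 2) := by
    rw [← Real.rpow_natCast, ← Real.rpow_mul (norm_nonneg v)]
    congr 1
    push_cast
    ring
  simp only [hpow, zero_smul, add_zero, hpow'] at hsq
  convert hsq using 1
  ring

theorem EuclideanSpace.real_inner_eq_re_inner {ι : Type*} [Fintype ι]
    (v w : EuclideanSpace ℂ ι) : inner ℝ v w = (inner ℂ v w).re := by
  simp [PiLp.inner_apply, Complex.re_sum]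

section dotc

variable {n : ℕ}

theorem dotc_add_left (v w u : EuclideanSpace ℂ (Fin n)) :
    dotc (v + w) u = dotc v u + dotc w u := by
  simp only [dotc, PiLp.add_apply, add_mul, Finset.sum_add_distrib]

theorem dotc_smul_left (z : ℂ) (w u : EuclideanSpace ℂ (Fin n)) :
    dotc (z • w) u = z * dotc w u := by
  simp only [dotc, PiLp.smul_apply, smul_eq_mul, Finset.mul_sum, mul_assoc]

open ComplexConjugate in
theorem inner_toLp_conj_eq_conj_dotc (v u : EuclideanSpace ℂ (Fin n)) :
    inner ℂ v (WithLp.toLp 2 fun i => conj (u i)) = conj (dotc v u) := by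
  simp [PiLp.inner_apply, dotc, map_sum, mul_comm]

theorem hasDerivAt_norm_add_smul_rpow_mul_dotc (q : ℝ) {v : EuclideanSpace ℂ (Fin n)}
    (hv : v ≠ 0) (w u : EuclideanSpace ℂ (Fin n)) :
    HasDerivAt (fun t : ℝ => ((‖v + (t : ℂ) • w‖ ^ q : ℝ) : ℂ) * dotc (v + (t : ℂ) • w) u)
      (((q * ‖v‖ ^ (q - 2) * (inner ℂ v w).re : ℝ) : ℂ) * dotc v u
        + ((‖v‖ ^ q : ℝ) : ℂ) * dotc w u) 0 := by
  have hnorm : HasDerivAt (fun t : ℝ => ‖v + (t : ℂ) • w‖ ^ q)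
      (q * ‖v‖ ^ (q - 2) * (inner ℂ v w).re) 0 := by
    simpa only [← Complex.coe_smul, EuclideanSpace.real_inner_eq_re_inner]
      using hasDerivAt_norm_add_smul_rpow q hv w
  have hdot : HasDerivAt (fun t : ℝ => dotc (v + (t : ℂ) • w) u) (dotc w u) 0 := by
    simp only [dotc_add_left, dotc_smul_left]
    simpa using (Complex.ofRealCLM.hasDerivAt.mul_const (dotc w u)).const_add (dotc v u)
  have h := hnorm.ofReal_comp.mul hdot
  simp only [Complex.ofReal_zero, zero_smul, add_zero] at h
  exact h

end dotc

theorem stmt_7_general (n : ℕ) (p : ℝ)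
    (v₁ v₂ v₃ : EuclideanSpace ℂ (Fin n)) (hv₁ : v₁ ≠ 0) :
    let cv₂ : EuclideanSpace ℂ (Fin n) := WithLp.toLp 2 (fun i => starRingEnd ℂ (v₂ i))
    let F : ℂ → ℂ := fun z =>
      ((‖v₁ + z • cv₂‖ ^ (p - 2) : ℝ) : ℂ) * dotc (v₁ + z • cv₂) v₃
    (1 / 2 : ℂ) * (deriv (fun t : ℝ => F t) 0 + Complex.I * deriv (fun t : ℝ => F (t * Complex.I)) 0) =
      (((p - 2) / 2 : ℝ) : ℂ) * ((‖v₁‖ ^ (p - 4) : ℝ) : ℂ) * dotc v₁ v₂ * dotc v₁ v₃ := by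
  intro cv₂ F
  have hF_imag : (fun t : ℝ => F (t * Complex.I)) = fun t : ℝ =>
      ((‖v₁ + (t : ℂ) • (Complex.I • cv₂)‖ ^ (p - 2) : ℝ) : ℂ)
        * dotc (v₁ + (t : ℂ) • (Complex.I • cv₂)) v₃ := by
    simp only [F, mul_smul]
  rw [(hasDerivAt_norm_add_smul_rpow_mul_dotc (p - 2) hv₁ cv₂ v₃).deriv, hF_imag,
    (hasDerivAt_norm_add_smul_rpow_mul_dotc (p - 2) hv₁ (Complex.I • cv₂) v₃).deriv,
    inner_smul_right, inner_toLp_conj_eq_conj_dotc, dotc_smul_left]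
  have hexp : p - 2 - 2 = p - 4 := by ring
  simp only [hexp, Complex.conj_re, Complex.conj_im, Complex.mul_re, Complex.I_re, Complex.I_im]
  push_cast
  linear_combination
    ((p : ℂ) - 2) * ((‖v₁‖ ^ (p - 4) : ℝ) : ℂ) * dotc v₁ v₃ / 2 * Complex.re_add_im (dotc v₁ v₂)
      + ((‖v₁‖ ^ (p - 2) : ℝ) : ℂ) * dotc cv₂ v₃ / 2 * Complex.I_sq

/-- Wirtinger derivative `∂_{z̄}` at `0` of
`F(z) = |v₁ + z v̄₂|^{p-2} (v₁ + z v̄₂)·v₃` equals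
`((p-2)/2) |v₁|^{p-4} (v₁·v₂)(v₁·v₃)`, for `v₁` real and nonzero.
Here `∂_{z̄} = (1/2)(∂_x + i ∂_y)`. -/
theorem stmt_7 (n : ℕ) (p : ℝ) (hp : 2 < p)
    (v₁ v₂ v₃ : EuclideanSpace ℂ (Fin n)) (hv₁ : v₁ ≠ 0) (hreal : ∀ i, (v₁ i).im = 0) :
    let cv₂ : EuclideanSpace ℂ (Fin n) := WithLp.toLp 2 (fun i => starRingEnd ℂ (v₂ i))
    let F : ℂ → ℂ := fun z =>
      ((‖v₁ + z • cv₂‖ ^ (p - 2) : ℝ) : ℂ) * dotc (v₁ + z • cv₂) v₃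
    (1 / 2 : ℂ) * (deriv (fun t : ℝ => F t) 0 + Complex.I * deriv (fun t : ℝ => F (t * Complex.I)) 0) =
      (((p - 2) / 2 : ℝ) : ℂ) * ((‖v₁‖ ^ (p - 4) : ℝ) : ℂ) * dotc v₁ v₂ * dotc v₁ v₃ :=
  stmt_7_general n p v₁ v₂ v₃ hv₁
end

section
/- Let Ω ⊆ ℝⁿ be bounded open, σ ∈ C¹(\overline{Ω}) with λ ≤ σ, and let w₀_M(x) = η(M(x−x₀)) exp(N(i ζ·x − ρ(x))) where ρ is C¹ with ρ(x₀) = 0, ρ ≥ 0 on \overline{Ω}, ∇ρ(x₀) ≠ 0, ζ ∈ ℝⁿ with ζ·∇ρ(x₀) = 0 and |ζ| = |∇ρ(x₀)|, η ∈ C^∞_c(B(0,1)), 0 ≤ η ≤ 1, η = 1 on B(0,1/2), x₀ ∈ ∂Ω, and M/N → 0 as M → ∞. Then ∫_Ω |∇w₀_M|² dx = O(M^{1-n} N) as M → ∞. -/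
open Metric Filter MeasureTheory

/-- Tangential basis vector `(e_i, 0)` in `ℝ^{n-1} × ℝ` (with `d = n-1`). -/
noncomputable def eT (d : ℕ) (i : Fin d) : EuclideanSpace ℝ (Fin d) × ℝ :=
  (EuclideanSpace.single i (1:ℝ), 0)

/-- Normal basis vector `(0, 1)` in `ℝ^{n-1} × ℝ`. -/
noncomputable def eN (d : ℕ) : EuclideanSpace ℝ (Fin d) × ℝ := (0, 1)

/-- `|∇f|² = Σᵢ |∂ᵢ f|²` for a complex-valued function on `ℝ^{n-1} × ℝ`. -/
noncomputable def gradSq {d : ℕ} (f : EuclideanSpace ℝ (Fin d) × ℝ → ℂ)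
    (x : EuclideanSpace ℝ (Fin d) × ℝ) : ℝ :=
  (∑ i, ‖fderiv ℝ f x (eT d i)‖ ^ 2) + ‖fderiv ℝ f x (eN d)‖ ^ 2

/-- `|∇ρ|²` for a real-valued function on `ℝ^{n-1} × ℝ`. -/
noncomputable def gradSqR {d : ℕ} (ρ : EuclideanSpace ℝ (Fin d) × ℝ → ℝ)
    (x : EuclideanSpace ℝ (Fin d) × ℝ) : ℝ :=
  (∑ i, (fderiv ℝ ρ x (eT d i)) ^ 2) + (fderiv ℝ ρ x (eN d)) ^ 2

abbrev Ed (d : ℕ) := EuclideanSpace ℝ (Fin d)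
abbrev Xd (d : ℕ) := EuclideanSpace ℝ (Fin d) × ℝ

lemma aux_setIntegral_prod_mul {α β : Type*} [MeasureSpace α] [MeasureSpace β]
    [SigmaFinite (volume : Measure α)] [SigmaFinite (volume : Measure β)]
    (f : α → ℝ) (g : β → ℝ) (s : Set α) (t : Set β) :
    ∫ z in s ×ˢ t, f z.1 * g z.2 = (∫ x in s, f x) * ∫ y in t, g y := by
  rw [Measure.volume_eq_prod, ← Measure.prod_restrict, integral_prod_mul]

theorem aux_exp_int {b : ℝ} (hb : 0 < b) :
    ∫ x in Set.Ioi (0:ℝ), Real.exp (-b*x) = 1/b := by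
  have h : ∀ x ∈ Set.Ici (0:ℝ), HasDerivAt (fun t => -Real.exp (-b*t)/b) (Real.exp (-b*x)) x := by
    intro x _
    have := (((hasDerivAt_id x).const_mul (-b)).exp).neg.div_const b
    refine this.congr_deriv ?_
    simp only [id]
    field_simp
  have htend : Filter.Tendsto (fun x => -Real.exp (-b*x)/b) Filter.atTop (nhds 0) := by
    have : Filter.Tendsto (fun x => -Real.exp (-b*x)/b) Filter.atTop (nhds (-0/b)) := by
      refine Filter.Tendsto.div_const (Filter.Tendsto.neg ?_) _
      exact Real.tendsto_exp_atBot.comp (Filter.tendsto_id.const_mul_atTop_of_neg (by linarith))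
    simpa using this
  have := integral_Ioi_of_hasDerivAt_of_tendsto' h (exp_neg_integrableOn_Ioi 0 hb) htend
  rw [this]; simp; ring

set_option maxHeartbeats 2000000 in
/-- Energy bound for the approximate solutions
`w⁰_M(x) = η(M x) exp(N(i ζ·x − ρ(x)))` concentrating at the boundary point
`x₀ = 0` where the boundary is flat and `ρ(x) = x_n`:
`∫_Ω |∇w⁰_M|² dx = O(M^{1-n} N)` as `M → ∞` with `M/N → 0`. -/
theorem stmt_14 (d : ℕ) (Ω : Set (EuclideanSpace ℝ (Fin d) × ℝ))
    (hΩo : IsOpen Ω) (hΩb : Bornology.IsBounded Ω)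
    (σ : EuclideanSpace ℝ (Fin d) × ℝ → ℝ) (hσ : ContDiff ℝ 1 σ)
    (lam : ℝ) (hlam : 0 < lam) (hσl : ∀ x, lam ≤ σ x)
    (ρ : EuclideanSpace ℝ (Fin d) × ℝ → ℝ) (hρ : ContDiff ℝ 1 ρ)
    (hρ0 : ρ 0 = 0) (hρpos : ∀ x ∈ closure Ω, 0 ≤ ρ x) (hρg : gradSqR ρ 0 ≠ 0)
    (ζ' : EuclideanSpace ℝ (Fin d)) (ζn : ℝ)
    (hζorth : fderiv ℝ ρ 0 ((ζ' : EuclideanSpace ℝ (Fin d)), ζn) = 0)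
    (hζnorm : ‖ζ'‖ ^ 2 + ζn ^ 2 = gradSqR ρ 0)
    (η : EuclideanSpace ℝ (Fin d) × ℝ → ℝ) (hη : ContDiff ℝ (⊤ : ℕ∞) η)
    (hηsupp : tsupport η ⊆ ball 0 1) (hη01 : ∀ x, 0 ≤ η x ∧ η x ≤ 1)
    (hη1 : ∀ x ∈ ball (0 : EuclideanSpace ℝ (Fin d) × ℝ) (1/2), η x = 1)
    (hx₀ : (0 : EuclideanSpace ℝ (Fin d) × ℝ) ∈ frontier Ω)
    (δ : ℝ) (hδ : 0 < δ)
    (hflat : Ω ∩ ball 0 δ = {x ∈ ball (0 : EuclideanSpace ℝ (Fin d) × ℝ) δ | 0 < x.2})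
    (hρflat : ∀ x ∈ ball (0 : EuclideanSpace ℝ (Fin d) × ℝ) δ, ρ x = x.2)
    (N : ℕ → ℝ) (hN : Tendsto N atTop atTop)
    (hMN : Tendsto (fun M : ℕ => (M : ℝ) / N M) atTop (nhds 0)) :
    ∃ C : ℝ, ∃ M₀ : ℕ, ∀ M : ℕ, M₀ ≤ M →
      ∫ x in Ω, gradSq (fun x => ((η ((M : ℝ) • x) : ℝ) : ℂ) *
          Complex.exp ((N M : ℂ) * (Complex.I * (((inner ℝ ζ' x.1 : ℝ) + ζn * x.2 : ℝ) : ℂ) -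
            ((ρ x : ℝ) : ℂ)))) x ≤
        C * (M : ℝ) ^ (1 - (d + 1 : ℤ)) * N M := by
  classical
  -- bound for the derivative of η
  have hηcs : HasCompactSupport η :=
    IsCompact.of_isClosed_subset (isCompact_closedBall 0 1) (isClosed_tsupport η)
      (hηsupp.trans ball_subset_closedBall)
  obtain ⟨K₀, hK₀⟩ := (hηcs.fderiv ℝ).exists_bound_of_continuous (hη.continuous_fderiv (by simp))
  set K := max K₀ 0 with hKdef
  have hK : ∀ y, ‖fderiv ℝ η y‖ ≤ K := fun y => (hK₀ y).trans (le_max_left _ _)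
  have hK0 : 0 ≤ K := le_max_right _ _
  -- the linear functional x ↦ ⟨ζ', x.1⟩ + ζn * x.2
  set cL : Xd d →L[ℝ] ℝ := ((innerSL ℝ ζ').comp (ContinuousLinearMap.fst ℝ (Ed d) ℝ)) +
      ζn • (ContinuousLinearMap.snd ℝ (Ed d) ℝ) with hcLdef
  have hcL : ∀ v : Xd d, cL v = inner ℝ ζ' v.1 + ζn * v.2 := by
    intro v; simp [hcLdef]
  have hcLnorm : ‖cL‖ ≤ ‖ζ'‖ + |ζn| := by
    refine ContinuousLinearMap.opNorm_le_bound _ (by positivity) (fun v => ?_)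
    rw [hcL]
    calc ‖inner ℝ ζ' v.1 + ζn * v.2‖ ≤ ‖(inner ℝ ζ' v.1 : ℝ)‖ + ‖ζn * v.2‖ := norm_add_le _ _
      _ ≤ ‖ζ'‖ * ‖v.1‖ + |ζn| * |v.2| := by
          gcongr
          · exact norm_inner_le_norm _ _
          · rw [Real.norm_eq_abs, abs_mul]
      _ ≤ ‖ζ'‖ * ‖v‖ + |ζn| * ‖v‖ := by
          gcongr
          · exact norm_fst_le v
          · exact norm_snd_le v
      _ = (‖ζ'‖ + |ζn|) * ‖v‖ := by ring
  set cζ : ℝ := ‖ζ'‖ + |ζn| + 1 with hcζdef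
  have hcζ1 : 1 ≤ cζ := by
    rw [hcζdef]
    have h1 := norm_nonneg ζ'
    have h2 := abs_nonneg ζn
    linarith
  set A : ℝ := K + cζ with hAdef
  set V : ℝ := (volume (ball (0 : Ed d) 1)).toReal with hVdef
  have hV0 : 0 ≤ V := ENNReal.toReal_nonneg
  set C : ℝ := (d+1) * A^2 * V / 2 with hCdef
  -- choice of M₀
  have hev : ∀ᶠ M : ℕ in atTop, (1 : ℝ) ≤ (M:ℝ) ∧ 1/(M:ℝ) < δ ∧ 1 ≤ N M ∧ (M:ℝ) ≤ N M := by
    have h1 : ∀ᶠ M : ℕ in atTop, (1:ℝ) ≤ (M:ℝ) := by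
      filter_upwards [eventually_ge_atTop 1] with M hM
      exact_mod_cast hM
    have h2 : ∀ᶠ M : ℕ in atTop, 1/(M:ℝ) < δ := by
      have := (tendsto_one_div_atTop_nhds_zero_nat).eventually (eventually_lt_nhds hδ)
      exact this
    have h3 : ∀ᶠ M : ℕ in atTop, 1 ≤ N M := hN.eventually (eventually_ge_atTop 1)
    have h4 : ∀ᶠ M : ℕ in atTop, (M:ℝ)/N M < 1 :=
      hMN.eventually (eventually_lt_nhds one_pos)
    filter_upwards [h1, h2, h3, h4] with M hM1 hM2 hM3 hM4
    refine ⟨hM1, hM2, hM3, ?_⟩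
    have hNpos : 0 < N M := lt_of_lt_of_le one_pos hM3
    exact le_of_lt ((div_lt_one hNpos).mp hM4)
  obtain ⟨M₀, hM₀⟩ := hev.exists_forall_of_atTop
  refine ⟨C, M₀, fun M hM => ?_⟩
  obtain ⟨hM1, hMδ, hN1, hMleN⟩ := hM₀ M hM
  have hMpos : (0:ℝ) < M := lt_of_lt_of_le one_pos hM1
  have hNpos : (0:ℝ) < N M := lt_of_lt_of_le one_pos hN1
  set f : Xd d → ℂ := fun x => ((η ((M : ℝ) • x) : ℝ) : ℂ) *
      Complex.exp ((N M : ℂ) * (Complex.I * (((inner ℝ ζ' x.1 : ℝ) + ζn * x.2 : ℝ) : ℂ) -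
        ((ρ x : ℝ) : ℂ))) with hfdef
  set B : ℝ := K * M + cζ * N M with hBdef
  have hB0 : 0 ≤ B := by positivity
  -- the scaling map
  set s : Xd d →L[ℝ] Xd d := (M:ℝ) • ContinuousLinearMap.id ℝ (Xd d) with hsdef
  have hs : ∀ y : Xd d, s y = (M:ℝ) • y := fun y => rfl
  have hsnorm : ‖s‖ ≤ M := by
    refine ContinuousLinearMap.opNorm_le_bound _ hMpos.le (fun v => ?_)
    rw [hs v, norm_smul, Real.norm_eq_abs, abs_of_nonneg hMpos.le]
  -- vanishing of f and its derivative outside the closed ball of radius 1/M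
  have hvanish : ∀ x : Xd d, x ∉ closedBall (0:Xd d) (1/M) → f =ᶠ[nhds x] 0 := by
    intro x hx
    have hxn : 1/(M:ℝ) < ‖x‖ := by
      simpa [mem_closedBall, dist_zero_right, not_le] using hx
    have hopen : IsOpen {y : Xd d | 1/(M:ℝ) < ‖y‖} := isOpen_lt continuous_const continuous_norm
    refine Filter.eventuallyEq_of_mem (hopen.mem_nhds hxn) (fun y hy => ?_)
    have hyn : (1:ℝ) < ‖(M:ℝ) • y‖ := by
      rw [norm_smul, Real.norm_eq_abs, abs_of_nonneg hMpos.le]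
      have : 1/(M:ℝ) < ‖y‖ := hy
      calc (1:ℝ) = (M:ℝ) * (1/M) := by field_simp
        _ < (M:ℝ) * ‖y‖ := by gcongr
    have : η ((M:ℝ) • y) = 0 := by
      apply image_eq_zero_of_notMem_tsupport
      intro hmem
      have := hηsupp hmem
      rw [mem_ball, dist_zero_right] at this
      linarith
    simp [hfdef, this]
  have hfderiv0 : ∀ x : Xd d, x ∉ closedBall (0:Xd d) (1/M) → fderiv ℝ f x = 0 := by
    intro x hx
    rw [Filter.EventuallyEq.fderiv_eq (hvanish x hx)]
    exact fderiv_const_apply 0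
  -- pointwise derivative bound on the δ-ball
  have hfbound : ∀ x : Xd d, x ∈ ball (0:Xd d) δ →
      ‖fderiv ℝ f x‖ ≤ B * Real.exp (-(N M) * x.2) := by
    intro x hxball
    -- derivative of ρ
    have hρeq : ρ =ᶠ[nhds x] (fun y : Ed d × ℝ => y.2) :=
      Filter.eventuallyEq_of_mem (isOpen_ball.mem_nhds hxball) hρflat
    have hρx : HasFDerivAt ρ (ContinuousLinearMap.snd ℝ (Ed d) ℝ) x :=
      ((ContinuousLinearMap.snd ℝ (Ed d) ℝ).hasFDerivAt).congr_of_eventuallyEq hρeq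
    -- derivative of the exponent
    set φ' : Xd d →L[ℝ] ℂ := (N M : ℂ) • (Complex.I • (Complex.ofRealCLM.comp cL) -
        Complex.ofRealCLM.comp (ContinuousLinearMap.snd ℝ (Ed d) ℝ)) with hφ'def
    have hφ : HasFDerivAt (fun y : Ed d × ℝ => (N M : ℂ) *
        (Complex.I * (((inner ℝ ζ' y.1 : ℝ) + ζn * y.2 : ℝ) : ℂ) - ((ρ y : ℝ) : ℂ))) φ' x := by
      have hc : HasFDerivAt (fun y : Ed d × ℝ => (((inner ℝ ζ' y.1 : ℝ) + ζn * y.2 : ℝ) : ℂ))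
          (Complex.ofRealCLM.comp cL) x := by
        have h1 : HasFDerivAt (fun y : Ed d × ℝ => ((cL y : ℝ) : ℂ)) (Complex.ofRealCLM.comp cL) x :=
          Complex.ofRealCLM.hasFDerivAt.comp x cL.hasFDerivAt
        have hfun : (fun y : Ed d × ℝ => (((inner ℝ ζ' y.1 : ℝ) + ζn * y.2 : ℝ) : ℂ)) =
            fun y : Ed d × ℝ => ((cL y : ℝ) : ℂ) := by
          funext y; rw [hcL]
        rw [hfun]
        exact h1
      have hr : HasFDerivAt (fun y : Ed d × ℝ => ((ρ y : ℝ) : ℂ))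
          (Complex.ofRealCLM.comp (ContinuousLinearMap.snd ℝ (Ed d) ℝ)) x :=
        Complex.ofRealCLM.hasFDerivAt.comp x hρx
      exact ((hc.const_mul Complex.I).sub hr).const_mul _
    have hexp := hφ.cexp
    -- derivative of the cutoff
    have hsder : HasFDerivAt (fun y : Ed d × ℝ => (M:ℝ) • y) s x := by
      exact s.hasFDerivAt
    have hgR : HasFDerivAt (fun y : Ed d × ℝ => η ((M:ℝ) • y))
        ((fderiv ℝ η ((M:ℝ) • x)).comp s) x :=
      ((hη.differentiable (by simp) ((M:ℝ) • x)).hasFDerivAt).comp x hsder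
    have hg : HasFDerivAt (fun y : Ed d × ℝ => ((η ((M:ℝ) • y) : ℝ) : ℂ))
        (Complex.ofRealCLM.comp ((fderiv ℝ η ((M:ℝ) • x)).comp s)) x :=
      Complex.ofRealCLM.hasFDerivAt.comp x hgR
    set eφ : ℂ := Complex.exp ((N M : ℂ) *
        (Complex.I * (((inner ℝ ζ' x.1 : ℝ) + ζn * x.2 : ℝ) : ℂ) - ((ρ x : ℝ) : ℂ))) with heφdef
    set G' : Xd d →L[ℝ] ℂ := Complex.ofRealCLM.comp ((fderiv ℝ η ((M:ℝ) • x)).comp s) with hG'def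
    have hf : HasFDerivAt f (((η ((M:ℝ) • x) : ℝ) : ℂ) • (eφ • φ') + eφ • G') x := hg.mul hexp
    rw [hf.fderiv]
    -- norm estimates
    have hexpnorm : ‖eφ‖ = Real.exp (-(N M) * x.2) := by
      rw [heφdef, Complex.norm_exp]
      congr 1
      have hx2 : ρ x = x.2 := hρflat x hxball
      simp [Complex.mul_re, hx2]
    have hφ'norm : ‖φ'‖ ≤ N M * cζ := by
      refine ContinuousLinearMap.opNorm_le_bound _ (by positivity) (fun v => ?_)
      rw [hφ'def]
      simp only [ContinuousLinearMap.smul_apply, ContinuousLinearMap.sub_apply,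
        ContinuousLinearMap.comp_apply, Complex.ofRealCLM_apply,
        ContinuousLinearMap.coe_snd']
      calc ‖(N M : ℂ) • (Complex.I • ((cL v : ℝ) : ℂ) - ((v.2 : ℝ) : ℂ))‖
          = ‖(N M : ℂ)‖ * ‖Complex.I • ((cL v : ℝ) : ℂ) - ((v.2 : ℝ) : ℂ)‖ := norm_smul _ _
        _ ≤ N M * (‖Complex.I • ((cL v : ℝ) : ℂ)‖ + ‖((v.2 : ℝ) : ℂ)‖) := by
            rw [Complex.norm_real, Real.norm_eq_abs, abs_of_nonneg hNpos.le]
            exact mul_le_mul_of_nonneg_left (norm_sub_le _ _) hNpos.le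
        _ ≤ N M * ((‖ζ'‖ + |ζn|) * ‖v‖ + ‖v‖) := by
            have e1 : ‖Complex.I • ((cL v : ℝ) : ℂ)‖ ≤ (‖ζ'‖ + |ζn|) * ‖v‖ := by
              rw [norm_smul, Complex.norm_I, one_mul, Complex.norm_real]
              exact (cL.le_opNorm v).trans (mul_le_mul_of_nonneg_right hcLnorm (norm_nonneg _))
            have e2 : ‖((v.2 : ℝ) : ℂ)‖ ≤ ‖v‖ := by
              rw [Complex.norm_real]
              exact norm_snd_le v
            exact mul_le_mul_of_nonneg_left (add_le_add e1 e2) hNpos.le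
        _ = N M * cζ * ‖v‖ := by rw [hcζdef]; ring
    have hG'norm : ‖G'‖ ≤ K * M := by
      rw [hG'def]
      calc ‖Complex.ofRealCLM.comp ((fderiv ℝ η ((M:ℝ) • x)).comp s)‖
          ≤ ‖Complex.ofRealCLM‖ * ‖(fderiv ℝ η ((M:ℝ) • x)).comp s‖ :=
            ContinuousLinearMap.opNorm_comp_le _ _
        _ = ‖(fderiv ℝ η ((M:ℝ) • x)).comp s‖ := by rw [Complex.ofRealCLM_norm, one_mul]
        _ ≤ ‖fderiv ℝ η ((M:ℝ) • x)‖ * ‖s‖ := ContinuousLinearMap.opNorm_comp_le _ _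
        _ ≤ K * M := mul_le_mul (hK _) hsnorm (norm_nonneg _) hK0
    have hηx : ‖((η ((M:ℝ) • x) : ℝ) : ℂ)‖ ≤ 1 := by
      rw [Complex.norm_real, Real.norm_eq_abs, abs_le]
      exact ⟨by linarith [(hη01 ((M:ℝ) • x)).1], (hη01 ((M:ℝ) • x)).2⟩
    refine ContinuousLinearMap.opNorm_le_bound _ (by positivity) (fun v => ?_)
    simp only [ContinuousLinearMap.add_apply, ContinuousLinearMap.smul_apply]
    have hφv : ‖φ' v‖ ≤ N M * cζ * ‖v‖ :=
      (φ'.le_opNorm v).trans (mul_le_mul_of_nonneg_right hφ'norm (norm_nonneg v))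
    have hGv : ‖G' v‖ ≤ K * M * ‖v‖ :=
      (G'.le_opNorm v).trans (mul_le_mul_of_nonneg_right hG'norm (norm_nonneg v))
    have hexpnn := (Real.exp_pos (-(N M) * x.2)).le
    calc ‖((η ((M:ℝ) • x) : ℝ) : ℂ) • (eφ • φ' v) + eφ • G' v‖
        ≤ ‖((η ((M:ℝ) • x) : ℝ) : ℂ) • (eφ • φ' v)‖ + ‖eφ • G' v‖ := norm_add_le _ _
      _ = ‖((η ((M:ℝ) • x) : ℝ) : ℂ)‖ * (‖eφ‖ * ‖φ' v‖) + ‖eφ‖ * ‖G' v‖ := by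
          rw [norm_smul, norm_smul, norm_smul]
      _ ≤ 1 * (Real.exp (-(N M) * x.2) * (N M * cζ * ‖v‖)) +
            Real.exp (-(N M) * x.2) * (K * M * ‖v‖) := by
          rw [hexpnorm]
          gcongr
      _ = B * Real.exp (-(N M) * x.2) * ‖v‖ := by rw [hBdef]; ring
  -- f is C¹
  have hfC1 : ContDiff ℝ 1 f := by
    have h1 : ContDiff ℝ 1 (fun y : Ed d × ℝ => ((η ((M:ℝ) • y) : ℝ) : ℂ)) :=
      Complex.ofRealCLM.contDiff.comp ((hη.of_le (by simp)).comp (contDiff_id.const_smul (M:ℝ)))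
    have hcc : ContDiff ℝ 1 (fun y : Ed d × ℝ => (((inner ℝ ζ' y.1 : ℝ) + ζn * y.2 : ℝ) : ℂ)) := by
      have h2 : ContDiff ℝ 1 (fun y : Ed d × ℝ => ((cL y : ℝ) : ℂ)) :=
        Complex.ofRealCLM.contDiff.comp cL.contDiff
      have hfun : (fun y : Ed d × ℝ => (((inner ℝ ζ' y.1 : ℝ) + ζn * y.2 : ℝ) : ℂ)) =
          fun y : Ed d × ℝ => ((cL y : ℝ) : ℂ) := by
        funext y; rw [hcL]
      rw [hfun]; exact h2
    have hr : ContDiff ℝ 1 (fun y : Ed d × ℝ => ((ρ y : ℝ) : ℂ)) :=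
      Complex.ofRealCLM.contDiff.comp hρ
    exact h1.mul (contDiff_const.mul ((contDiff_const.mul hcc).sub hr)).cexp
  -- continuity and integrability of gradSq f
  have hfd_cont : Continuous (fderiv ℝ f) := hfC1.continuous_fderiv one_ne_zero
  have hgs_cont : Continuous (gradSq f) := by
    have hv : ∀ v : Xd d, Continuous fun x => ‖fderiv ℝ f x v‖ ^ 2 := fun v =>
      (((ContinuousLinearMap.apply ℝ ℂ v).continuous.comp hfd_cont).norm.pow 2)
    exact ((continuous_finset_sum _ fun i _ => hv (eT d i)).add (hv (eN d)))
  have hgs_supp : HasCompactSupport (gradSq f) :=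
    HasCompactSupport.intro (isCompact_closedBall (0:Xd d) (1/M)) (fun x hx => by
      simp [gradSq, hfderiv0 x hx])
  have hInt1 : IntegrableOn (gradSq f) Ω volume :=
    (hgs_cont.integrable_of_hasCompactSupport hgs_supp).integrableOn
  -- the dominating function
  set F : Xd d → ℝ := Set.indicator (closedBall (0:Ed d) (1/M) ×ˢ Set.Ioi (0:ℝ))
      (fun x => ((d:ℝ)+1) * B^2 * Real.exp (-(2 * N M) * x.2)) with hFdef
  have hmeas : MeasurableSet (closedBall (0:Ed d) (1/M) ×ˢ Set.Ioi (0:ℝ)) :=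
    measurableSet_closedBall.prod measurableSet_Ioi
  have h2N : (0:ℝ) < 2 * N M := by linarith
  have hIntprod : IntegrableOn (fun x : Xd d => ((d:ℝ)+1) * B^2 * Real.exp (-(2*N M) * x.2))
      (closedBall (0:Ed d) (1/M) ×ˢ Set.Ioi (0:ℝ)) volume := by
    have hconst : IntegrableOn (fun _ : Ed d => ((d:ℝ)+1) * B^2)
        (closedBall (0:Ed d) (1/M)) volume :=
      integrableOn_const measure_closedBall_lt_top.ne
    have hexp : IntegrableOn (fun t : ℝ => Real.exp (-(2*N M) * t)) (Set.Ioi 0) volume :=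
      exp_neg_integrableOn_Ioi 0 h2N
    unfold IntegrableOn at hconst hexp ⊢
    rw [Measure.volume_eq_prod, ← Measure.prod_restrict]
    exact hconst.mul_prod hexp
  have hIntF : Integrable F volume := by
    rw [hFdef]
    exact (integrable_indicator_iff hmeas).mpr hIntprod
  have hFnonneg : ∀ x, 0 ≤ F x := fun x =>
    Set.indicator_nonneg (fun y _ => by positivity) x
  -- pointwise domination
  have hdom : ∀ x ∈ Ω, gradSq f x ≤ F x := by
    intro x hxΩ
    by_cases hx : x ∈ closedBall (0:Xd d) (1/M)
    · have hxnorm : ‖x‖ ≤ 1/M := mem_closedBall_zero_iff.mp hx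
      have hxball : x ∈ ball (0:Xd d) δ := mem_ball_zero_iff.mpr (lt_of_le_of_lt hxnorm hMδ)
      have hx2 : 0 < x.2 := by
        have hmem : x ∈ Ω ∩ ball 0 δ := ⟨hxΩ, hxball⟩
        rw [hflat] at hmem
        exact hmem.2
      have hxmem : x ∈ closedBall (0:Ed d) (1/M) ×ˢ Set.Ioi (0:ℝ) :=
        ⟨mem_closedBall_zero_iff.mpr ((norm_fst_le x).trans hxnorm), hx2⟩
      rw [hFdef, Set.indicator_of_mem hxmem]
      have hbd := hfbound x hxball
      have hterm : ∀ v : Xd d, ‖v‖ = 1 →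
          ‖fderiv ℝ f x v‖^2 ≤ B^2 * Real.exp (-(2*N M) * x.2) := by
        intro v hv
        have h1 : ‖fderiv ℝ f x v‖ ≤ B * Real.exp (-(N M) * x.2) := by
          calc ‖fderiv ℝ f x v‖ ≤ ‖fderiv ℝ f x‖ * ‖v‖ := (fderiv ℝ f x).le_opNorm v
            _ = ‖fderiv ℝ f x‖ := by rw [hv, mul_one]
            _ ≤ B * Real.exp (-(N M)*x.2) := hbd
        calc ‖fderiv ℝ f x v‖^2 ≤ (B * Real.exp (-(N M)*x.2))^2 :=
              pow_le_pow_left₀ (norm_nonneg _) h1 2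
          _ = B^2 * Real.exp (-(2*N M)*x.2) := by
              rw [mul_pow, pow_two (Real.exp _), ← Real.exp_add]
              congr 2
              ring
      have heT : ∀ i : Fin d, ‖eT d i‖ = 1 := by
        intro i
        simp [eT, Prod.norm_def, EuclideanSpace.norm_single]
      have heN : ‖eN d‖ = 1 := by simp [eN, Prod.norm_def]
      have hsum : ∑ i, ‖fderiv ℝ f x (eT d i)‖^2 ≤ (d:ℝ) * (B^2 * Real.exp (-(2*N M)*x.2)) := by
        calc ∑ i, ‖fderiv ℝ f x (eT d i)‖^2
            ≤ ∑ _i : Fin d, B^2 * Real.exp (-(2*N M)*x.2) :=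
              Finset.sum_le_sum (fun i _ => hterm (eT d i) (heT i))
          _ = (d:ℝ) * (B^2 * Real.exp (-(2*N M)*x.2)) := by
              rw [Finset.sum_const, Finset.card_univ, Fintype.card_fin, nsmul_eq_mul]
      have hlast := hterm (eN d) heN
      show (∑ i, ‖fderiv ℝ f x (eT d i)‖ ^ 2) + ‖fderiv ℝ f x (eN d)‖ ^ 2 ≤
        ((d:ℝ)+1) * B^2 * Real.exp (-(2*N M)*x.2)
      nlinarith [hsum, hlast]
    · have h0 : gradSq f x = 0 := by simp [gradSq, hfderiv0 x hx]
      rw [h0]; exact hFnonneg x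
  -- chain of inequalities
  have hstep1 : ∫ x in Ω, gradSq f x ≤ ∫ x in Ω, F x :=
    setIntegral_mono_on hInt1 hIntF.integrableOn hΩo.measurableSet hdom
  have hstep2 : ∫ x in Ω, F x ≤ ∫ x, F x :=
    setIntegral_le_integral hIntF (Filter.Eventually.of_forall hFnonneg)
  have hstep3 : ∫ x, F x = ((d:ℝ)+1) * B^2 *
      ((volume (closedBall (0:Ed d) (1/M))).toReal) * (1/(2*N M)) := by
    rw [hFdef, integral_indicator hmeas]
    have hsplit : (fun x : Xd d => ((d:ℝ)+1) * B^2 * Real.exp (-(2*N M) * x.2)) =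
        fun z : Xd d => (fun _ : Ed d => ((d:ℝ)+1) * B^2) z.1 *
          (fun t : ℝ => Real.exp (-(2*N M)*t)) z.2 := rfl
    rw [hsplit]
    have hpm := aux_setIntegral_prod_mul (fun _ : Ed d => ((d:ℝ)+1) * B^2)
      (fun t : ℝ => Real.exp (-(2*N M)*t)) (closedBall (0:Ed d) (1/M)) (Set.Ioi 0)
    rw [show (∫ z in (closedBall (0:Ed d) (1/M)) ×ˢ Set.Ioi (0:ℝ),
        (fun _ : Ed d => ((d:ℝ)+1) * B^2) z.1 * (fun t : ℝ => Real.exp (-(2*N M)*t)) z.2)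
        = (∫ x in closedBall (0:Ed d) (1/M), ((d:ℝ)+1) * B^2) *
          ∫ t in Set.Ioi (0:ℝ), Real.exp (-(2*N M)*t) from hpm,
      setIntegral_const, aux_exp_int h2N]
    simp only [smul_eq_mul, Measure.real]
    ring
  have hvol : (volume (closedBall (0:Ed d) (1/M))).toReal = (1/(M:ℝ))^d * V := by
    rw [Measure.addHaar_closedBall _ _ (by positivity : (0:ℝ) ≤ 1/M),
      finrank_euclideanSpace_fin, ENNReal.toReal_mul,
      ENNReal.toReal_ofReal (by positivity), hVdef]
  have hBA : B ≤ A * N M := by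
    rw [hBdef, hAdef]
    have h1 : K * M ≤ K * N M := by
      exact mul_le_mul_of_nonneg_left hMleN hK0
    linarith
  have hzpow : (M:ℝ)^(1-(d+1:ℤ)) = (1/(M:ℝ))^d := by
    have he : (1 - (d+1:ℤ)) = -(d:ℤ) := by ring
    rw [he, zpow_neg, zpow_natCast, one_div, inv_pow]
  have hfinal : ((d:ℝ)+1) * B^2 * ((1/(M:ℝ))^d * V) * (1/(2*N M)) ≤
      C * (M:ℝ)^(1-(d+1:ℤ)) * N M := by
    rw [hzpow, hCdef]
    have hB2 : B^2 ≤ A^2 * (N M)^2 := by nlinarith [hB0, hBA]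
    calc ((d:ℝ)+1) * B^2 * ((1/(M:ℝ))^d * V) * (1/(2*N M))
        ≤ ((d:ℝ)+1) * (A^2 * (N M)^2) * ((1/(M:ℝ))^d * V) * (1/(2*N M)) := by
          have hPnn : (0:ℝ) ≤ (1/(M:ℝ))^d * V := by positivity
          have hqnn : (0:ℝ) ≤ 1/(2*N M) := by positivity
          have hc1 : (0:ℝ) ≤ (d:ℝ)+1 := by positivity
          exact mul_le_mul_of_nonneg_right
            (mul_le_mul_of_nonneg_right (mul_le_mul_of_nonneg_left hB2 hc1) hPnn) hqnn
      _ = ((d:ℝ)+1) * A^2 * V / 2 * (1/(M:ℝ))^d * N M := by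
          field_simp
  calc ∫ x in Ω, gradSq f x ≤ ∫ x in Ω, F x := hstep1
    _ ≤ ∫ x, F x := hstep2
    _ = ((d:ℝ)+1) * B^2 * ((1/(M:ℝ))^d * V) * (1/(2*N M)) := by rw [hstep3, hvol]
    _ ≤ C * (M:ℝ)^(1-(d+1:ℤ)) * N M := hfinal
end
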